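/- Let μ be a probability measure on the unit circle S¹ ⊆ ℝ² invariant under rotation by π/2, let γ : [0,L] → ℝ² be a C¹ curve with ‖γ̇(t)‖ = 1 for all t, and define B = ∫_0^L ∫_0^L ∫_{S¹} ⟨θ, γ̇(t₁)⟩² ⟨θ, γ̇(t₂)⟩² dμ(θ) dt₁ dt₂. Then B ≥ L²/4. -/

import Mathlib

/-!
Put `A θ = ∫₀^L ⟨θ, γ̇ t⟩² dt`. By Fubini, `B = ∫ A² dμ`, and since `μ` is a probability measure,
`∫ A² dμ ≥ (∫ A dμ)²`. Rotation invariance gives `∫ ⟨θ, v⟩² dμ = 1/2` for every unit vector `v`,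
because `⟨θ, v⟩² + ⟨θ^⊥, v⟩² = |θ|² |v|² = 1`; hence `∫ A dμ = L/2`.
-/

open MeasureTheory Real intervalIntegral Function ProbabilityTheory Set
open scoped Interval

theorem sq_integral_le_integral_sq {Ω : Type*} [MeasurableSpace Ω] {μ : Measure Ω}
    [IsProbabilityMeasure μ] {X : Ω → ℝ} (hX : MemLp X 2 μ) :
    (∫ ω, X ω ∂μ) ^ 2 ≤ ∫ ω, X ω ^ 2 ∂μ := by
  have := variance_eq_sub hX ▸ variance_nonneg X μ
  simp only [Pi.pow_apply] at this
  linarith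

theorem intervalIntegral_intervalIntegral_eq_setIntegral_uIoc {E : Type*} [NormedAddCommGroup E]
    [NormedSpace ℝ E] (f : ℝ → ℝ → E) (a b : ℝ) :
    ∫ x in a..b, ∫ y in a..b, f x y = ∫ x in Ι a b, ∫ y in Ι a b, f x y := by
  simp_rw [intervalIntegral_eq_integral_uIoc, MeasureTheory.integral_smul, smul_smul]
  split_ifs <;> simp

section Fubini

variable {α β : Type*} [MeasurableSpace α] [MeasurableSpace β] {ρ : Measure α} {μ : Measure β}
  [IsFiniteMeasure ρ] {C : ℝ}

theorem integrable_prod_of_ae_forall_norm_le [IsFiniteMeasure μ] {G : α × β → ℝ}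
    (hG : AEStronglyMeasurable G (ρ.prod μ)) (hC : ∀ᵐ y ∂μ, ∀ x, ‖G (x, y)‖ ≤ C) :
    Integrable G (ρ.prod μ) :=
  .of_bound hG C <| (Measure.quasiMeasurePreserving_snd.ae hC).mono fun p hp => hp p.1

variable {F : α → β → ℝ}

theorem ae_norm_integral_le_of_ae_forall_norm_le (hC : ∀ᵐ y ∂μ, ∀ x, ‖F x y‖ ≤ C) :
    ∀ᵐ y ∂μ, ‖∫ x, F x y ∂ρ‖ ≤ C * ρ.real univ :=
  hC.mono fun _ hy => norm_integral_le_of_norm_le_const (.of_forall hy)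

theorem integral_integral_integral_mul_eq_integral_sq [IsFiniteMeasure μ]
    (hF : Measurable (uncurry F)) (hC : ∀ᵐ y ∂μ, ∀ x, ‖F x y‖ ≤ C) :
    ∫ x₁, ∫ x₂, ∫ y, F x₁ y * F x₂ y ∂μ ∂ρ ∂ρ = ∫ y, (∫ x, F x y ∂ρ) ^ 2 ∂μ := by
  set A := fun y => ∫ x, F x y ∂ρ
  have hA : Measurable A := hF.stronglyMeasurable.integral_prod_left.measurable
  have hA_le := ae_norm_integral_le_of_ae_forall_norm_le (ρ := ρ) hC
  have hFF : ∀ x₁, Integrable (uncurry fun x₂ y => F x₁ y * F x₂ y) (ρ.prod μ) := fun x₁ =>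
    integrable_prod_of_ae_forall_norm_le (C := C * C) (by fun_prop) <| hC.mono fun y hy x₂ => by
      simpa only [uncurry_apply_pair, norm_mul] using
        mul_le_mul (hy x₁) (hy x₂) (norm_nonneg _) ((norm_nonneg _).trans (hy x₁))
  have hFA : Integrable (uncurry fun x y => F x y * A y) (ρ.prod μ) :=
    integrable_prod_of_ae_forall_norm_le (C := C * (C * ρ.real univ)) (by fun_prop) <|
      (hC.and hA_le).mono fun y hy x => by
        simpa only [uncurry_apply_pair, norm_mul] using
          mul_le_mul (hy.1 x) hy.2 (norm_nonneg _) ((norm_nonneg _).trans (hy.1 x))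
  calc ∫ x₁, ∫ x₂, ∫ y, F x₁ y * F x₂ y ∂μ ∂ρ ∂ρ = ∫ x₁, ∫ y, F x₁ y * A y ∂μ ∂ρ := by
        refine integral_congr_ae (.of_forall fun x₁ => ?_)
        simp only [integral_integral_swap (hFF x₁), MeasureTheory.integral_const_mul, A]
    _ = ∫ y, A y ^ 2 ∂μ := by
        simp only [integral_integral_swap hFA, MeasureTheory.integral_mul_const, sq, A]

theorem sq_integral_integral_le_integral_integral_integral_mul [IsProbabilityMeasure μ]
    (hF : Measurable (uncurry F)) (hC : ∀ᵐ y ∂μ, ∀ x, ‖F x y‖ ≤ C) :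
    (∫ x, ∫ y, F x y ∂μ ∂ρ) ^ 2 ≤ ∫ x₁, ∫ x₂, ∫ y, F x₁ y * F x₂ y ∂μ ∂ρ ∂ρ := by
  have hF_int : Integrable (uncurry F) (ρ.prod μ) :=
    integrable_prod_of_ae_forall_norm_le hF.aestronglyMeasurable hC
  rw [integral_integral_swap hF_int, integral_integral_integral_mul_eq_integral_sq hF hC]
  have hA : Measurable fun y => ∫ x, F x y ∂ρ :=
    hF.stronglyMeasurable.integral_prod_left.measurable
  exact sq_integral_le_integral_sq <| .of_bound hA.aestronglyMeasurable _ <|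
    ae_norm_integral_le_of_ae_forall_norm_le hC

end Fubini

theorem proj_sq_add_proj_rotate_sq (x v : ℝ × ℝ) :
    (x.1 * v.1 + x.2 * v.2) ^ 2 + (-x.2 * v.1 + x.1 * v.2) ^ 2
      = (x.1 ^ 2 + x.2 ^ 2) * (v.1 ^ 2 + v.2 ^ 2) := by
  ring

theorem integral_proj_sq_eq_half {μ : Measure (ℝ × ℝ)} [IsProbabilityMeasure μ]
    (hsupp : ∀ᵐ θ ∂μ, θ.1 ^ 2 + θ.2 ^ 2 = 1)
    (hrot : μ.map (fun θ : ℝ × ℝ => (-θ.2, θ.1)) = μ)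
    {v : ℝ × ℝ} (hv : v.1 ^ 2 + v.2 ^ 2 = 1) :
    ∫ θ, (θ.1 * v.1 + θ.2 * v.2) ^ 2 ∂μ = 1 / 2 := by
  set f := fun θ : ℝ × ℝ => (θ.1 * v.1 + θ.2 * v.2) ^ 2
  set R := fun θ : ℝ × ℝ => (-θ.2, θ.1)
  have hsum : ∀ᵐ θ ∂μ, f θ + f (R θ) = 1 := hsupp.mono fun θ hθ => by
    simp only [f, R, proj_sq_add_proj_rotate_sq, hθ, hv, one_mul]
  have hf_le : ∀ᵐ θ ∂μ, ‖f θ‖ ≤ 1 ∧ ‖f (R θ)‖ ≤ 1 := hsum.mono fun θ hθ => by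
    have : 0 ≤ f θ := sq_nonneg _
    have : 0 ≤ f (R θ) := sq_nonneg _
    simp only [Real.norm_eq_abs, abs_le]
    constructor <;> constructor <;> linarith
  have hR_inv : ∫ θ, f (R θ) ∂μ = ∫ θ, f θ ∂μ := by
    conv_rhs => rw [← hrot]
    exact (integral_map (by fun_prop) (by fun_prop)).symm
  have hf : Integrable f μ := .of_bound (by fun_prop) 1 (hf_le.mono fun _ => And.left)
  have hfR : Integrable (fun θ => f (R θ)) μ :=
    .of_bound (by fun_prop) 1 (hf_le.mono fun _ => And.right)
  have : ∫ θ, f θ + f (R θ) ∂μ = 1 := by simp [integral_congr_ae hsum]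
  rw [integral_add hf hfR, hR_inv] at this
  linarith

theorem nodal_intersection_B_lower_bound_general (μ : Measure (ℝ × ℝ)) [IsProbabilityMeasure μ]
    (hsupp : ∀ᵐ θ ∂μ, θ.1 ^ 2 + θ.2 ^ 2 = 1)
    (hrot : μ.map (fun θ : ℝ × ℝ => (-θ.2, θ.1)) = μ)
    (L : ℝ) (dγ : ℝ → ℝ × ℝ)
    (hcont : Continuous dγ)
    (hunit : ∀ t, (dγ t).1 ^ 2 + (dγ t).2 ^ 2 = 1) :
    L ^ 2 / 4 ≤
      ∫ t₁ in (0:ℝ)..L, ∫ t₂ in (0:ℝ)..L,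
        ∫ θ, (θ.1 * (dγ t₁).1 + θ.2 * (dγ t₁).2) ^ 2 *
              (θ.1 * (dγ t₂).1 + θ.2 * (dγ t₂).2) ^ 2 ∂μ := by
  set F := fun (t : ℝ) (θ : ℝ × ℝ) => (θ.1 * (dγ t).1 + θ.2 * (dγ t).2) ^ 2
  have hF : Measurable (uncurry F) := by fun_prop
  have hF_le : ∀ᵐ θ ∂μ, ∀ t, ‖F t θ‖ ≤ 1 := hsupp.mono fun θ hθ t => by
    have := proj_sq_add_proj_rotate_sq θ (dγ t)
    rw [hθ, hunit, one_mul] at this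
    rw [Real.norm_of_nonneg (sq_nonneg _)]
    nlinarith
  have hmean : ∫ t in Ι 0 L, ∫ θ, F t θ ∂μ = |L| / 2 := by
    simp [F, integral_proj_sq_eq_half hsupp hrot (hunit _), measureReal_def, Real.volume_uIoc,
      div_eq_mul_inv]
  have : IsFiniteMeasure (volume.restrict (Ι 0 L)) :=
    isFiniteMeasure_restrict.2 (by simp [Real.volume_uIoc])
  calc L ^ 2 / 4 = (∫ t in Ι 0 L, ∫ θ, F t θ ∂μ) ^ 2 := by
        rw [hmean, div_pow, sq_abs]; norm_num
    _ ≤ _ := sq_integral_integral_le_integral_integral_integral_mul hF hF_le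
    _ = _ := (intervalIntegral_intervalIntegral_eq_setIntegral_uIoc _ 0 L).symm

/-- For a probability measure `μ` on the unit circle invariant under rotation by `π/2` and
a unit-speed `C¹` curve `γ : [0,L] → ℝ²`, the quantity
`B = ∫₀^L ∫₀^L ∫_{S¹} ⟨θ,γ̇(t₁)⟩²⟨θ,γ̇(t₂)⟩² dμ dt₁ dt₂` satisfies `B ≥ L²/4`. -/
theorem nodal_intersection_B_lower_bound (μ : Measure (ℝ × ℝ)) [IsProbabilityMeasure μ]
    (hsupp : ∀ᵐ θ ∂μ, θ.1 ^ 2 + θ.2 ^ 2 = 1)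
    (hrot : μ.map (fun θ : ℝ × ℝ => (-θ.2, θ.1)) = μ)
    (L : ℝ) (hL : 0 ≤ L) (γ dγ : ℝ → ℝ × ℝ)
    (hderiv : ∀ t, HasDerivAt γ (dγ t) t) (hcont : Continuous dγ)
    (hunit : ∀ t, (dγ t).1 ^ 2 + (dγ t).2 ^ 2 = 1) :
    L ^ 2 / 4 ≤
      ∫ t₁ in (0:ℝ)..L, ∫ t₂ in (0:ℝ)..L,
        ∫ θ, (θ.1 * (dγ t₁).1 + θ.2 * (dγ t₁).2) ^ 2 *
              (θ.1 * (dγ t₂).1 + θ.2 * (dγ t₂).2) ^ 2 ∂μ :=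
  nodal_intersection_B_lower_bound_general μ hsupp hrot L dγ hcont hunit
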